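/- (Corollary to Proposition 8.) For every set S of argumentation frameworks over U (i.e., every set of pairs (A',R') with A' ⊆ U and R' ⊆ A'×A') there exists a constrained incomplete AF (A, φ) with completions(A, φ) = S; in fact one can take A = U. -/

import Mathlib

noncomputable section

namespace DLPA

/-- Propositional variables: awareness, acceptance, attack, auxiliary acceptance
copies, plus countably many further auxiliary variables. -/
inductive PVar (U : Type) : Type
  | aw : U → PVar U
  | inn : U → PVar U
  | att : U → U → PVar U
  | inn' : U → PVar U
  | aux : Nat → PVar U

-- DL-PA formulas and programs, by mutual recursion.
mutual
  inductive Form (U : Type) : Type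
    | var : PVar U → Form U
    | neg : Form U → Form U
    | conj : Form U → Form U → Form U
    | box : Prog U → Form U → Form U
  inductive Prog (U : Type) : Type
    | add : PVar U → Prog U           -- +p
    | rem : PVar U → Prog U           -- −p
    | test : Form U → Prog U          -- φ?
    | seq : Prog U → Prog U → Prog U
    | choice : Prog U → Prog U → Prog U
    | conv : Prog U → Prog U
end

variable {U : Type}

/-- A valuation is a set of propositional variables. -/
abbrev Val (U : Type) := Set (PVar U)

-- Satisfaction of formulas and interpretation of programs, by mutual recursion.
mutual
  def Sat : Val U → Form U → Prop
    | v, Form.var p => p ∈ v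
    | v, Form.neg φ => ¬ Sat v φ
    | v, Form.conj φ ψ => Sat v φ ∧ Sat v ψ
    | v, Form.box π φ => ∀ w, Rel π v w → Sat w φ
  def Rel : Prog U → Val U → Val U → Prop
    | Prog.add p, v, w => w = v ∪ {p}
    | Prog.rem p, v, w => w = v \ {p}
    | Prog.test φ, v, w => w = v ∧ Sat v φ
    | Prog.seq π₁ π₂, v, w => ∃ u, Rel π₁ v u ∧ Rel π₂ u w
    | Prog.choice π₁ π₂, v, w => Rel π₁ v w ∨ Rel π₂ v w
    | Prog.conv π, v, w => Rel π w v
end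

def Form.falsum : Form U := Form.conj (Form.var (PVar.aux 0)) (Form.neg (Form.var (PVar.aux 0)))
def Form.top : Form U := Form.neg Form.falsum
def Form.impl (φ ψ : Form U) : Form U := Form.neg (Form.conj φ (Form.neg ψ))
def Form.disj (φ ψ : Form U) : Form U := Form.neg (Form.conj (Form.neg φ) (Form.neg ψ))
def Form.equiv (φ ψ : Form U) : Form U := Form.conj (Form.impl φ ψ) (Form.impl ψ φ)
def Form.dia (π : Prog U) (φ : Form U) : Form U := Form.neg (Form.box π (Form.neg φ))
def Prog.skip : Prog U := Prog.test Form.top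

/-- Sequential composition of a list of programs (`skip` for the empty list). -/
def seqList {β : Type} (f : β → Prog U) : List β → Prog U
  | [] => Prog.skip
  | p :: ps => Prog.seq (f p) (seqList f ps)

/-- Nondeterministic composition of a list of programs (`skip` for the empty list). -/
def unionList {β : Type} (f : β → Prog U) : List β → Prog U
  | [] => Prog.skip
  | [p] => f p
  | p :: ps => Prog.choice (f p) (unionList f ps)

def mkTrueOne (L : List (PVar U)) : Prog U :=
  unionList (fun p => Prog.seq (Prog.test (Form.neg (Form.var p))) (Prog.add p)) L
def mkFalseOne (L : List (PVar U)) : Prog U :=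
  unionList (fun p => Prog.seq (Prog.test (Form.var p)) (Prog.rem p)) L
def mkTrueSome (L : List (PVar U)) : Prog U :=
  seqList (fun p => Prog.choice (Prog.add p) Prog.skip) L
def mkFalseSome (L : List (PVar U)) : Prog U :=
  seqList (fun p => Prog.choice (Prog.rem p) Prog.skip) L
def vary (L : List (PVar U)) : Prog U :=
  seqList (fun p => Prog.choice (Prog.add p) (Prog.rem p)) L
/-- dis(ATT_R): for each pair (x,y) in the list, make true att_{x,y} or att_{y,x}. -/
def dis (L : List (U × U)) : Prog U :=
  seqList (fun q => Prog.choice (Prog.add (PVar.att q.1 q.2)) (Prog.add (PVar.att q.2 q.1))) L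

def conjList : List (Form U) → Form U
  | [] => Form.top
  | φ :: φs => Form.conj φ (conjList φs)
def disjList : List (Form U) → Form U
  | [] => Form.falsum
  | φ :: φs => Form.disj φ (disjList φs)

/-- The elements of a finite universe in a fixed order. -/
def enum (U : Type) [Fintype U] : List U := Finset.univ.toList

def bigConj [Fintype U] (f : U → Form U) : Form U := conjList ((enum U).map f)
def bigDisj [Fintype U] (f : U → Form U) : Form U := disjList ((enum U).map f)

def INlist (U : Type) [Fintype U] : List (PVar U) := (enum U).map PVar.inn

/-- copy(IN_U) copies the value of in_x to in'_x, for every x ∈ U. -/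
def copyIN (U : Type) [Fintype U] : Prog U :=
  seqList (fun x => Prog.choice
      (Prog.seq (Prog.test (Form.var (PVar.inn x))) (Prog.add (PVar.inn' x)))
      (Prog.seq (Prog.test (Form.neg (Form.var (PVar.inn x)))) (Prog.rem (PVar.inn' x))))
    (enum U)

def Well (U : Type) [Fintype U] : Form U :=
  bigConj (fun x => Form.impl (Form.var (PVar.inn x)) (Form.var (PVar.aw x)))

def ConFree (U : Type) [Fintype U] : Form U :=
  Form.conj (Well U) (bigConj fun x => bigConj fun y =>
    Form.neg (Form.conj (Form.var (PVar.inn x))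
      (Form.conj (Form.var (PVar.inn y)) (Form.var (PVar.att x y)))))

def AdmissibleF (U : Type) [Fintype U] : Form U :=
  Form.conj (ConFree U) (bigConj fun x => Form.impl (Form.var (PVar.inn x))
    (bigConj fun y => Form.impl (Form.conj (Form.var (PVar.aw y)) (Form.var (PVar.att y x)))
      (bigDisj fun z => Form.conj (Form.var (PVar.inn z)) (Form.var (PVar.att z y)))))

def StableF (U : Type) [Fintype U] : Form U :=
  Form.conj (Well U) (bigConj fun x => Form.impl (Form.var (PVar.aw x))
    (Form.equiv (Form.var (PVar.inn x))
      (Form.neg (bigDisj fun y => Form.conj (Form.var (PVar.inn y)) (Form.var (PVar.att y x))))))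

def CompleteF (U : Type) [Fintype U] : Form U :=
  Form.conj (ConFree U) (bigConj fun x => Form.equiv (Form.var (PVar.inn x))
    (bigConj fun y => Form.impl (Form.conj (Form.var (PVar.aw y)) (Form.var (PVar.att y x)))
      (bigDisj fun z => Form.conj (Form.var (PVar.inn z)) (Form.var (PVar.att z y)))))

def GroundedF (U : Type) [Fintype U] : Form U :=
  Form.conj (CompleteF U)
    (Form.box (Prog.seq (mkFalseOne (INlist U)) (mkFalseSome (INlist U))) (Form.neg (CompleteF U)))

def PreferredF (U : Type) [Fintype U] : Form U :=
  Form.conj (AdmissibleF U)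
    (Form.box (Prog.seq (mkTrueOne (INlist U)) (mkTrueSome (INlist U))) (Form.neg (AdmissibleF U)))

def NaiveF (U : Type) [Fintype U] : Form U :=
  Form.conj (ConFree U) (Form.box (mkTrueOne (INlist U)) (Form.neg (ConFree U)))

def IncludedInCp (U : Type) [Fintype U] : Form U :=
  bigConj fun x => Form.impl
    (Form.disj (Form.var (PVar.inn x)) (Form.conj (Form.var (PVar.aw x))
      (bigDisj fun y => Form.conj (Form.var (PVar.inn y)) (Form.var (PVar.att y x)))))
    (Form.disj (Form.var (PVar.inn' x)) (Form.conj (Form.var (PVar.aw x))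
      (bigDisj fun y => Form.conj (Form.var (PVar.inn' y)) (Form.var (PVar.att y x)))))

def IncludesCp (U : Type) [Fintype U] : Form U :=
  bigConj fun x => Form.impl
    (Form.disj (Form.var (PVar.inn' x)) (Form.conj (Form.var (PVar.aw x))
      (bigDisj fun y => Form.conj (Form.var (PVar.inn' y)) (Form.var (PVar.att y x)))))
    (Form.disj (Form.var (PVar.inn x)) (Form.conj (Form.var (PVar.aw x))
      (bigDisj fun y => Form.conj (Form.var (PVar.inn y)) (Form.var (PVar.att y x)))))

/-- makeExt^σ = vary(IN_U); φ_σ? -/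
def makeExt (U : Type) [Fintype U] (φ : Form U) : Prog U :=
  Prog.seq (vary (INlist U)) (Prog.test φ)

def SemiStableF (U : Type) [Fintype U] : Form U :=
  Form.conj (CompleteF U)
    (Form.box (Prog.seq (copyIN U) (makeExt U (CompleteF U)))
      (Form.impl (IncludesCp U) (IncludedInCp U)))

/-- A_v -/
def Av (v : Val U) : Set U := {x | PVar.aw x ∈ v}
/-- R_v -/
def Rv (v : Val U) : Set (U × U) := {q | q.1 ∈ Av v ∧ q.2 ∈ Av v ∧ PVar.att q.1 q.2 ∈ v}
/-- E(v) -/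
def Ev (v : Val U) : Set U := {x | PVar.inn x ∈ v}
/-- {x ∈ U : in'_x ∈ v} -/
def Cv (v : Val U) : Set U := {x | PVar.inn' x ∈ v}
/-- v_(A,R) = AW_A ∪ ATT_R -/
def valOf (A : Set U) (R : Set (U × U)) : Val U :=
  (PVar.aw '' A) ∪ ((fun q : U × U => PVar.att q.1 q.2) '' R)

/-- E⁺, the set of arguments of A attacked by E in (A,R). -/
def attacked (A : Set U) (R : Set (U × U)) (E : Set U) : Set U :=
  {x ∈ A | ∃ y ∈ E, (y, x) ∈ R}
/-- E⊕ = E ∪ E⁺, the range of E. -/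
def rangeOf (A : Set U) (R : Set (U × U)) (E : Set U) : Set U :=
  E ∪ attacked A R E

def IsConflictFree (A : Set U) (R : Set (U × U)) (E : Set U) : Prop :=
  E ⊆ A ∧ E ∩ attacked A R E = ∅
def Defends (A : Set U) (R : Set (U × U)) (E : Set U) (a : U) : Prop :=
  ∀ x ∈ A, (x, a) ∈ R → x ∈ attacked A R E
def IsAdmissibleExt (A : Set U) (R : Set (U × U)) (E : Set U) : Prop :=
  IsConflictFree A R E ∧ ∀ a ∈ E, Defends A R E a
def IsStableExt (A : Set U) (R : Set (U × U)) (E : Set U) : Prop :=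
  IsConflictFree A R E ∧ A \ E ⊆ attacked A R E
def IsCompleteExt (A : Set U) (R : Set (U × U)) (E : Set U) : Prop :=
  IsConflictFree A R E ∧ E = {a ∈ A | Defends A R E a}
def IsGroundedExt (A : Set U) (R : Set (U × U)) (E : Set U) : Prop :=
  IsCompleteExt A R E ∧ ∀ E', IsCompleteExt A R E' → E' ⊆ E → E' = E
def IsPreferredExt (A : Set U) (R : Set (U × U)) (E : Set U) : Prop :=
  IsCompleteExt A R E ∧ ∀ E', IsCompleteExt A R E' → E ⊆ E' → E' = E
def IsNaiveExt (A : Set U) (R : Set (U × U)) (E : Set U) : Prop :=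
  IsConflictFree A R E ∧ ∀ E', IsConflictFree A R E' → E ⊆ E' → E' = E
def IsSemiStableExt (A : Set U) (R : Set (U × U)) (E : Set U) : Prop :=
  IsCompleteExt A R E ∧ ¬ ∃ E', IsCompleteExt A R E' ∧ rangeOf A R E ⊂ rangeOf A R E'

end DLPA

end

noncomputable section
open DLPA

/-- φ is a program-free (Boolean) formula using only variables from S. -/
def UsesOnly {U : Type} (S : Set (PVar U)) : Form U → Prop
  | Form.var p => p ∈ S
  | Form.neg φ => UsesOnly S φ
  | Form.conj φ ψ => UsesOnly S φ ∧ UsesOnly S ψ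
  | Form.box _ _ => False

/-- AW_A ∪ ATT_{A×A}, the vocabulary of a constrained incomplete AF with domain A. -/
def cVocab {U : Type} (A : Set U) : Set (PVar U) :=
  (PVar.aw '' A) ∪ ((fun q : U × U => PVar.att q.1 q.2) '' (A ×ˢ A))

/-- AW_A ∪ IN_A ∪ ATT_{A×A}. -/
def cVocabFull {U : Type} (A : Set U) : Set (PVar U) :=
  cVocab A ∪ (PVar.inn '' A)

/-- (A*, R*) belongs to completions(A, φ). -/
def IsCCompletion {U : Type} (A : Set U) (φ : Form U)
    (As : Set U) (Rs : Set (U × U)) : Prop :=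
  ∃ v : Val U, v ⊆ cVocabFull A ∧ Sat v φ ∧ Av v = As ∧ Rv v = Rs

end

/-!
Over the finite vocabulary `AW_U ∪ ATT_{U×U}` every set of valuations is defined by a
disjunctive normal form. Take the one whose disjuncts describe the valuations
`AW_{A'} ∪ ATT_{R'}` for `(A', R') ∈ S`: a valuation satisfies it iff it agrees on the
vocabulary with one of them, and `A_v`, `R_v` only read the vocabulary, giving back
`A'` and `R'` because `R' ⊆ A' × A'`.
-/

noncomputable section

open Set

namespace DLPA

variable {U : Type}

/-- `p ∨ ¬p`; `Form.top` cannot be used in a constraint since it mentions `PVar.aux 0`. -/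
def Form.taut (p : PVar U) : Form U := Form.disj (Form.var p) (Form.neg (Form.var p))

open scoped Classical in
def Form.literal (w : Val U) (q : PVar U) : Form U :=
  if q ∈ w then Form.var q else Form.neg (Form.var q)

def Form.agreesOn (p : PVar U) (V : List (PVar U)) (w : Val U) : Form U :=
  (V.map (Form.literal w)).foldr Form.conj (Form.taut p)

def Form.dnf (p : PVar U) (V : List (PVar U)) (W : List (Val U)) : Form U :=
  (W.map (Form.agreesOn p V)).foldr Form.disj (Form.neg (Form.taut p))

section Semantics

variable (v : Val U)

theorem sat_disj (φ ψ : Form U) : Sat v (Form.disj φ ψ) ↔ Sat v φ ∨ Sat v ψ := by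
  simp only [Form.disj, Sat]
  tauto

theorem sat_taut (p : PVar U) : Sat v (Form.taut p) := by
  rw [Form.taut, sat_disj]
  exact em _

theorem sat_foldr_conj_taut (p : PVar U) (L : List (Form U)) :
    Sat v (L.foldr Form.conj (Form.taut p)) ↔ ∀ φ ∈ L, Sat v φ := by
  induction L with
  | nil => simpa using sat_taut v p
  | cons φ L ih => simp only [List.foldr_cons, Sat, ih, List.forall_mem_cons]

theorem sat_foldr_disj_neg_taut (p : PVar U) (L : List (Form U)) :
    Sat v (L.foldr Form.disj (Form.neg (Form.taut p))) ↔ ∃ φ ∈ L, Sat v φ := by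
  induction L with
  | nil => simpa [Sat] using sat_taut v p
  | cons φ L ih => simp only [List.foldr_cons, sat_disj, ih, List.mem_cons, or_and_right, exists_or,
      exists_eq_left]

theorem sat_literal (w : Val U) (q : PVar U) : Sat v (Form.literal w q) ↔ (q ∈ v ↔ q ∈ w) := by
  by_cases hq : q ∈ w <;> simp [Form.literal, hq, Sat]

theorem sat_agreesOn (p : PVar U) (V : List (PVar U)) (w : Val U) :
    Sat v (Form.agreesOn p V w) ↔ ∀ q ∈ V, (q ∈ v ↔ q ∈ w) := by
  simp only [Form.agreesOn, sat_foldr_conj_taut, List.forall_mem_map, sat_literal]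

theorem sat_dnf (p : PVar U) (V : List (PVar U)) (W : List (Val U)) :
    Sat v (Form.dnf p V W) ↔ ∃ w ∈ W, ∀ q ∈ V, (q ∈ v ↔ q ∈ w) := by
  simp only [Form.dnf, sat_foldr_disj_neg_taut, List.mem_map, exists_exists_and_eq_and, sat_agreesOn]

end Semantics

section Vocabulary

variable {X : Set (PVar U)}

theorem usesOnly_foldr_conj {φ₀ : Form U} (h₀ : UsesOnly X φ₀) {L : List (Form U)}
    (hL : ∀ φ ∈ L, UsesOnly X φ) : UsesOnly X (L.foldr Form.conj φ₀) := by
  induction L with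
  | nil => exact h₀
  | cons φ L ih =>
    rw [List.forall_mem_cons] at hL
    exact ⟨hL.1, ih hL.2⟩

theorem usesOnly_foldr_disj {φ₀ : Form U} (h₀ : UsesOnly X φ₀) {L : List (Form U)}
    (hL : ∀ φ ∈ L, UsesOnly X φ) : UsesOnly X (L.foldr Form.disj φ₀) := by
  induction L with
  | nil => exact h₀
  | cons φ L ih =>
    rw [List.forall_mem_cons] at hL
    exact ⟨hL.1, ih hL.2⟩

theorem usesOnly_taut {p : PVar U} (hp : p ∈ X) : UsesOnly X (Form.taut p) :=
  ⟨hp, hp⟩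

theorem usesOnly_literal (w : Val U) {q : PVar U} (hq : q ∈ X) :
    UsesOnly X (Form.literal w q) := by
  unfold Form.literal
  split_ifs
  exacts [hq, hq]

theorem usesOnly_dnf {p : PVar U} (hp : p ∈ X) {V : List (PVar U)} (hV : ∀ q ∈ V, q ∈ X)
    (W : List (Val U)) : UsesOnly X (Form.dnf p V W) := by
  refine usesOnly_foldr_disj (φ₀ := Form.neg (Form.taut p)) (usesOnly_taut hp) ?_
  simp only [List.forall_mem_map]
  intro w _
  refine usesOnly_foldr_conj (usesOnly_taut hp) ?_
  simp only [List.forall_mem_map]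
  exact fun q hqV => usesOnly_literal w (hV q hqV)

end Vocabulary

section Frameworks

theorem finite_cVocab [Finite U] (A : Set U) : (cVocab A).Finite :=
  (A.toFinite.image _).union ((A.toFinite.prod A.toFinite).image _)

theorem aw_mem_cVocab_univ (x : U) : PVar.aw x ∈ cVocab (univ : Set U) :=
  Or.inl ⟨x, mem_univ x, rfl⟩

theorem att_mem_cVocab_univ (x y : U) : PVar.att x y ∈ cVocab (univ : Set U) :=
  Or.inr ⟨(x, y), ⟨mem_univ x, mem_univ y⟩, rfl⟩

theorem valOf_subset_cVocab_univ (A : Set U) (R : Set (U × U)) :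
    valOf A R ⊆ cVocab (univ : Set U) := by
  rintro _ (⟨x, -, rfl⟩ | ⟨⟨x, y⟩, -, rfl⟩)
  exacts [aw_mem_cVocab_univ x, att_mem_cVocab_univ x y]

theorem Av_valOf (A : Set U) (R : Set (U × U)) : Av (valOf A R) = A := by
  ext x
  simp [Av, valOf]

theorem att_mem_valOf {A : Set U} {R : Set (U × U)} {x y : U} :
    PVar.att x y ∈ valOf A R ↔ (x, y) ∈ R := by
  simp [valOf]

theorem Rv_valOf {A : Set U} {R : Set (U × U)} (hR : R ⊆ A ×ˢ A) : Rv (valOf A R) = R := by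
  ext ⟨x, y⟩
  simp only [Rv, Av_valOf, mem_ofPred_eq, att_mem_valOf]
  exact ⟨fun h => h.2.2, fun h => ⟨(hR h).1, (hR h).2, h⟩⟩

variable {v w : Val U} (h : ∀ q ∈ cVocab (univ : Set U), q ∈ v ↔ q ∈ w)
include h

theorem Av_congr : Av v = Av w := by
  ext x
  exact h _ (aw_mem_cVocab_univ x)

theorem Rv_congr : Rv v = Rv w := by
  ext ⟨x, y⟩
  simp only [Rv, Av_congr h, mem_ofPred_eq, h _ (att_mem_cVocab_univ x y)]

end Frameworks

end DLPA

end

open DLPA in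
/-- Corollary to Proposition 8: cIAFs can express any set of AFs over U (taking A = U). -/
theorem ciaf_maximally_expressive
    (U : Type) [Fintype U] [Nonempty U]
    (S : Set (Set U × Set (U × U))) (hS : ∀ p ∈ S, p.2 ⊆ p.1 ×ˢ p.1) :
    ∃ φ : Form U, UsesOnly (cVocab (Set.univ : Set U)) φ ∧
      ∀ (As : Set U) (Rs : Set (U × U)),
        IsCCompletion (Set.univ : Set U) φ As Rs ↔ (As, Rs) ∈ S := by
  obtain ⟨x₀⟩ := ‹Nonempty U›
  let V := (finite_cVocab (Set.univ : Set U)).toFinset.toList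
  have hV : ∀ q, q ∈ V ↔ q ∈ cVocab Set.univ := by simp [V]
  let W := (Set.toFinite S).toFinset.toList.map fun P => valOf P.1 P.2
  refine ⟨Form.dnf (PVar.aw x₀) V W, usesOnly_dnf (aw_mem_cVocab_univ x₀) (fun q => (hV q).1) W,
    fun As Rs => ?_⟩
  simp only [IsCCompletion, sat_dnf, hV]
  simp only [W, List.mem_map, exists_exists_and_eq_and, Finset.mem_toList, Set.Finite.mem_toFinset]
  constructor
  · rintro ⟨v, -, ⟨P, hP, hvP⟩, rfl, rfl⟩
    rwa [Av_congr hvP, Rv_congr hvP, Av_valOf, Rv_valOf (hS P hP)]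
  · intro hmem
    exact ⟨valOf As Rs, (valOf_subset_cVocab_univ As Rs).trans Set.subset_union_left,
      ⟨(As, Rs), hmem, fun _ _ => Iff.rfl⟩, Av_valOf As Rs, Rv_valOf (hS _ hmem)⟩
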